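/- Let X be a non-empty perfect Polish space, n ∈ ℕ, and let π be a balanced scheme of size n. Then there exist balanced schemes π_j (j ∈ ℕ) of size n+1, each consistent with π, such that the open sets U(π_j) are pairwise disjoint and ⋃_{j} U(π_j) is dense in U(π). -/

import Mathlib

open Filter Set TopologicalSpace
open scoped Classical

/-- `ValidIdx a l`: the list `l` is a valid index tuple, i.e. its `k`-th entry lies in
`{0, …, a k − 1}` (representing `{1, …, a_{k+1}}` in the paper, zero-indexed). -/
def ValidIdx (a : ℕ → ℕ) (l : List ℕ) : Prop :=
  ∀ k (hk : k < l.length), l.get ⟨k, hk⟩ < a k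

noncomputable def SetDist {X : Type*} [MetricSpace X] (A B : Set X) : ℝ :=
  sInf (Set.image2 dist A B)

/-- The index function `Φ_{a}` determined by the fixed surjection `Ψ` (where `Ψ m` stands
for the value of `Ψ` at the odd number `2m+1`): `Φ(2m+1) = Ψ(2m+1)` if it is a non-empty
valid index tuple of level at most `2m+1`, and the tuple `(1) ∈ I₁` (here `[0]`,
zero-indexed) otherwise. -/
noncomputable def PhiIdx (Ψ : ℕ → List ℕ) (a : ℕ → ℕ) (m : ℕ) : List ℕ :=
  if 1 ≤ (Ψ m).length ∧ (Ψ m).length ≤ 2 * m + 1 ∧ ValidIdx a (Ψ m) then Ψ m else [0]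

/-- A balanced scheme of size `n` (size `0` is the empty scheme): branching numbers `a`
(meaningful for `k < 2n`), non-empty open sets `U l` for valid tuples `l` of level
`1 ≤ l.length ≤ 2n`, and constants `b` witnessing conditions (1)–(5) of the definition of
balanced schemes; condition (5) is governed by the index function `PhiIdx Ψ a`. -/
def IsBalancedScheme {X : Type*} [MetricSpace X] (Ψ : ℕ → List ℕ) (n : ℕ)
    (a : ℕ → ℕ) (U : List ℕ → Set X) (b : ℕ → ℝ) : Prop :=
  (∀ k, k < 2 * n → 1 ≤ a k) ∧
  (1 ≤ n → 2 ≤ a 0) ∧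
  (∀ k, 1 ≤ k → k < 2 * n → k * ∏ i ∈ Finset.range k, a i ≤ a k) ∧
  (∀ l, ValidIdx a l → 1 ≤ l.length → l.length ≤ 2 * n → (U l).Nonempty ∧ IsOpen (U l)) ∧
  (∀ l x, ValidIdx a (l ++ [x]) → 1 ≤ l.length → l.length + 1 ≤ 2 * n →
    closure (U (l ++ [x])) ⊆ U l) ∧
  (∀ k, 1 ≤ k → k ≤ 2 * n → 0 < b k) ∧
  (∀ l, ValidIdx a l → 1 ≤ l.length → l.length ≤ 2 * n → Metric.diam (U l) ≤ b l.length) ∧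
  (∀ l l', ValidIdx a l → ValidIdx a l' → 1 ≤ l.length → l.length = l'.length →
    l.length ≤ 2 * n → l ≠ l' → 2 * b l.length < SetDist (U l) (U l')) ∧
  (∀ m i j, 2 * m + 1 < 2 * n → ValidIdx a i → ValidIdx a j →
    i.length = 2 * m + 1 → j.length = 2 * m + 1 →
    U i ⊆ U (PhiIdx Ψ a m) → ¬ U j ⊆ U (PhiIdx Ψ a m) →
    ∀ s t, s < a (2 * m + 1) → t < a (2 * m + 1) → s ≠ t →
      Metric.diam (⋃ u ∈ Finset.range (a (2 * m + 1)), U (j ++ [u])) <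
        SetDist (U (i ++ [s])) (U (i ++ [t]))) 

/-- The open subset `𝒰(π) ⊆ K(X)` associated to a balanced scheme of size `n`: the
non-empty compact sets covered by the level-`2n` sets and meeting each of them.
For `n = 0` it is all of `K(X)`. -/
def SchemeSet {X : Type*} [MetricSpace X] (a : ℕ → ℕ) (U : List ℕ → Set X) (n : ℕ) :
    Set (NonemptyCompacts X) :=
  if n = 0 then Set.univ else
    {K | (K : Set X) ⊆ (⋃ l ∈ {l : List ℕ | ValidIdx a l ∧ l.length = 2 * n}, U l) ∧
      ∀ l, ValidIdx a l → l.length = 2 * n → ((K : Set X) ∩ U l).Nonempty}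

def SchemeConsistent {X : Type*} [MetricSpace X] (n : ℕ) (a a' : ℕ → ℕ)
    (U U' : List ℕ → Set X) : Prop :=
  (∀ k, k < 2 * n → a' k = a k) ∧
    ∀ l : List ℕ, ValidIdx a l → 1 ≤ l.length → l.length ≤ 2 * n → U' l = U l

/-! Fix a countable dense set `D`. A single refinement of `π` is obtained by letting the sets of
the two new levels be small balls, the top ones all of one radius `r` about a finite set of
centres chosen near a given finite set `T` that fits `π`; then `𝒰` of the refinement consists of
the compacta lying within `r` of the centres in the strict two-sided sense. The refinements are
built one after another. At each stage a pair `(T, k)`, with `T ⊆ D` finite and fitting `π`, is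
taken from an enumeration. If `T` is within the radius of an earlier refinement, then `T` itself
lies in its `𝒰`, because the radius avoids the countably many distances between `D` and the
centres; otherwise `T` keeps a positive margin from each earlier family of centres, and placing
the new centres within `1 / (k + 1)` of `T` makes the new `𝒰` disjoint from the earlier ones. A
point `w₀` kept outside all top balls provides a target for the stages of the first kind. Every
`K ∈ 𝒰(π)` is close to some such `T`, so the union of the `𝒰`'s is dense in `𝒰(π)`. -/

section

open Metric Topology

section ValidIdx

lemma validIdx_append_singleton {a : ℕ → ℕ} {l : List ℕ} {x : ℕ} :
    ValidIdx a (l ++ [x]) ↔ ValidIdx a l ∧ x < a l.length := by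
  simp only [ValidIdx, List.get_eq_getElem, List.length_append, List.length_singleton]
  constructor
  · intro h
    refine ⟨fun k hk => ?_, ?_⟩
    · simpa [List.getElem_append_left hk] using h k (by omega)
    · simpa using h l.length (by omega)
  · rintro ⟨hl, hx⟩ k hk
    rcases Nat.lt_or_ge k l.length with hk' | hk'
    · simpa [List.getElem_append_left hk'] using hl k hk'
    · obtain rfl : k = l.length := by omega
      simpa using hx

lemma validIdx_take {a : ℕ → ℕ} {l : List ℕ} (h : ValidIdx a l) (m : ℕ) :
    ValidIdx a (l.take m) := fun k hk => by
  simpa [List.getElem_take] using h k (by simp at hk; omega)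

lemma validIdx_dropLast {a : ℕ → ℕ} {l : List ℕ} (h : ValidIdx a l) :
    ValidIdx a l.dropLast := by
  rw [List.dropLast_eq_take]; exact validIdx_take h _

lemma validIdx_congr {a a' : ℕ → ℕ} {l : List ℕ} (h : ValidIdx a l)
    (haa' : ∀ k < l.length, a k = a' k) : ValidIdx a' l := fun k hk =>
  haa' k hk ▸ h k hk

lemma validIdx_replicate {a : ℕ → ℕ} {m : ℕ} (ha : ∀ k < m, 1 ≤ a k) :
    ValidIdx a (List.replicate m 0) := by
  induction m with
  | zero => exact nofun
  | succ m ih =>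
    rw [List.replicate_succ', validIdx_append_singleton, List.length_replicate]
    exact ⟨ih fun k hk => ha k (by omega), ha m (by omega)⟩

lemma validIdx_finite (a : ℕ → ℕ) (m : ℕ) : {l | ValidIdx a l ∧ l.length = m}.Finite := by
  induction m with
  | zero => exact (Set.finite_singleton []).subset fun l hl => List.eq_nil_of_length_eq_zero hl.2
  | succ m ih =>
    refine (ih.image2 (fun l x => l ++ [x]) (Set.finite_Iio (a m))).subset fun l ⟨hl, hlen⟩ => ?_
    obtain ⟨l', x, rfl⟩ := List.eq_nil_or_concat l |>.resolve_left (by rintro rfl; simp at hlen)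
    replace hlen : l'.length = m := by simpa using hlen
    rw [List.concat_eq_append] at hl ⊢
    rw [validIdx_append_singleton, hlen] at hl
    exact ⟨l', ⟨hl.1, hlen⟩, x, hl.2, rfl⟩

noncomputable def validTuples (a : ℕ → ℕ) (m : ℕ) : Finset (List ℕ) :=
  (validIdx_finite a m).toFinset

@[simp] lemma mem_validTuples {a : ℕ → ℕ} {m : ℕ} {l : List ℕ} :
    l ∈ validTuples a m ↔ ValidIdx a l ∧ l.length = m :=
  Set.Finite.mem_toFinset _

lemma append_singleton_mem_validTuples {a : ℕ → ℕ} {m : ℕ} {l : List ℕ} {x : ℕ}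
    (hl : l ∈ validTuples a m) (hx : x < a m) : l ++ [x] ∈ validTuples a (m + 1) := by
  rw [mem_validTuples] at hl ⊢
  exact ⟨validIdx_append_singleton.2 ⟨hl.1, hl.2 ▸ hx⟩, by simp [hl.2]⟩

lemma dropLast_mem_validTuples {a : ℕ → ℕ} {m : ℕ} {l : List ℕ}
    (hl : l ∈ validTuples a (m + 1)) : l.dropLast ∈ validTuples a m := by
  rw [mem_validTuples] at hl ⊢
  exact ⟨validIdx_dropLast hl.1, by simp [hl.2]⟩

end ValidIdx

section SetDist

variable {X : Type*} [MetricSpace X]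

lemma setDist_le_dist {A B : Set X} {x y : X} (hx : x ∈ A) (hy : y ∈ B) :
    SetDist A B ≤ dist x y :=
  csInf_le ⟨0, by rintro _ ⟨u, -, v, -, rfl⟩; exact dist_nonneg⟩ ⟨x, hx, y, hy, rfl⟩

lemma le_setDist {A B : Set X} {c : ℝ} (hA : A.Nonempty) (hB : B.Nonempty)
    (h : ∀ x ∈ A, ∀ y ∈ B, c ≤ dist x y) : c ≤ SetDist A B :=
  le_csInf (hA.image2 hB) (by rintro _ ⟨x, hx, y, hy, rfl⟩; exact h x hx y hy)

lemma disjoint_of_setDist_pos {A B : Set X} (h : 0 < SetDist A B) : Disjoint A B :=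
  Set.disjoint_left.2 fun x hxA hxB => by
    have := setDist_le_dist hxA hxB
    rw [dist_self] at this
    linarith

lemma sub_le_setDist_ball {x y : X} {r r' : ℝ} (hr : 0 < r) (hr' : 0 < r') :
    dist x y - r - r' ≤ SetDist (ball x r) (ball y r') :=
  le_setDist (nonempty_ball.2 hr) (nonempty_ball.2 hr') fun u hu v hv => by
    rw [mem_ball] at hu hv
    linarith [dist_triangle4 x u v y, dist_comm x u]

end SetDist

section Perfect

variable {X : Type*} [TopologicalSpace X] [T1Space X]

lemma exists_injOn_forall_mem_notMem [Nonempty X] (hperf : ∀ x : X, (𝓝[≠] x).NeBot)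
    {ι : Type*} (s : Finset ι) (V : ι → Set X) (hV : ∀ i ∈ s, IsOpen (V i) ∧ (V i).Nonempty)
    (Z : Finset X) : ∃ f : ι → X, Set.InjOn f s ∧ ∀ i ∈ s, f i ∈ V i ∧ f i ∉ Z := by
  classical
  induction s using Finset.induction_on with
  | empty => exact ⟨fun _ => Classical.arbitrary X, by simp, by simp⟩
  | @insert i s hi ih =>
    obtain ⟨f, hf_inj, hf_mem⟩ := ih fun j hj => hV j (Finset.mem_insert_of_mem hj)
    obtain ⟨hVo, x, hx⟩ := hV i (Finset.mem_insert_self i s)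
    have := hperf x
    obtain ⟨y, hy, hyZ⟩ :=
      (infinite_of_mem_nhds x (hVo.mem_nhds hx)).exists_notMem_finset (Z ∪ s.image f)
    rw [Finset.mem_union, Finset.mem_image, not_or, not_exists] at hyZ
    have hf_ne : ∀ j ∈ s, f j ≠ y := fun j hj h => hyZ.2 j ⟨hj, h⟩
    refine ⟨Function.update f i y, ?_, ?_⟩
    · rw [Finset.coe_insert, Set.injOn_insert (by simpa using hi), Function.update_self]
      refine ⟨fun j hj k hk hjk => hf_inj hj hk ?_, ?_⟩
      · rwa [Function.update_of_ne (by rintro rfl; exact hi hj),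
          Function.update_of_ne (by rintro rfl; exact hi hk)] at hjk
      · rintro ⟨j, hj, hjy⟩
        rw [Function.update_of_ne (by rintro rfl; exact hi hj)] at hjy
        exact hf_ne j hj hjy
    · intro j hj
      rcases Finset.mem_insert.1 hj with rfl | hj'
      · simpa using ⟨hy, hyZ.1⟩
      · rw [Function.update_of_ne (by rintro rfl; exact hi hj')]
        exact hf_mem j hj'

end Perfect

lemma exists_pos_notMem_of_eventually {P : ℝ → Prop} (hP : ∀ᶠ r in 𝓝[>] 0, P r)
    {s : Set ℝ} (hs : s.Countable) : ∃ r, 0 < r ∧ P r ∧ r ∉ s := by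
  obtain ⟨m, hm, hmP⟩ := mem_nhdsGT_iff_exists_Ioo_subset.1 hP
  obtain ⟨r, hrs, hr⟩ := (hs.dense_compl ℝ).exists_mem_open isOpen_Ioo (nonempty_Ioo.2 hm)
  exact ⟨r, hr.1, hmP hr, hrs⟩

lemma exists_seq_of_forall_list_exists {P : Type*} (R : List P → P → Prop)
    (h : ∀ l, ∃ p, R l p) : ∃ f : ℕ → P, ∀ j, R ((List.range j).map f) (f j) := by
  choose g hg using h
  let L : ℕ → List P := fun j => Nat.rec [] (fun _ l => l ++ [g l]) j
  have hL : ∀ j, L j = (List.range j).map (fun i => g (L i)) := by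
    intro j
    induction j with
    | zero => rfl
    | succ j ih => rw [List.range_succ, List.map_append, ← ih]; rfl
  exact ⟨fun j => g (L j), fun j => hL j ▸ hg (L j)⟩

lemma Set.Countable.exists_enum_prod_nat {α : Type*} {S : Set α} (hS : S.Countable)
    (hne : S.Nonempty) : ∃ e : ℕ → α × ℕ, (∀ j, (e j).1 ∈ S) ∧ ∀ x ∈ S, ∀ k, ∃ m, e m = (x, k) := by
  obtain ⟨x₀, hx₀⟩ := hne
  obtain ⟨e, he⟩ := (hS.prod (Set.countable_univ (α := ℕ))).exists_eq_range
    ⟨(x₀, 0), Set.mk_mem_prod hx₀ (Set.mem_univ 0)⟩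
  exact ⟨e, fun j => (he.symm ▸ Set.mem_range_self j : e j ∈ S ×ˢ Set.univ).1,
    fun x hx k => (show (x, k) ∈ Set.range e from he ▸ Set.mk_mem_prod hx (Set.mem_univ k))⟩

lemma countable_setOf_finset_subset {X : Type*} {D : Set X} (hD : D.Countable) :
    {T : Finset X | (T : Set X) ⊆ D}.Countable := by
  refine ((Set.countable_ofPred_finite_subset hD).preimage
    (Finset.coe_injective (α := X))).mono fun T hT => ?_
  exact ⟨T.finite_toSet, hT⟩

lemma Finset.exists_surjOn_Iio {X : Type*} {S : Finset X} (hS : S.Nonempty) {A : ℕ}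
    (hA : S.card ≤ A) : ∃ g : ℕ → X, (∀ s, g s ∈ S) ∧ ∀ x ∈ S, ∃ s < A, g s = x := by
  obtain ⟨x₀, hx₀⟩ := hS
  refine ⟨fun s => S.toList.getD s x₀, fun s => ?_, fun x hx => ?_⟩
  · dsimp only
    rcases Nat.lt_or_ge s S.toList.length with hs | hs
    · rw [List.getD_eq_getElem _ _ hs, ← Finset.mem_toList]; exact List.getElem_mem hs
    · rwa [List.getD_eq_default _ _ hs]
  · obtain ⟨s, hs, rfl⟩ := List.getElem_of_mem (Finset.mem_toList.2 hx)
    exact ⟨s, by simpa using hs.trans_le (by simpa using hA), List.getD_eq_getElem _ _ hs⟩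

section Hausdorff

variable {X : Type*} [MetricSpace X]

def HausdorffLE (A B : Set X) (r : ℝ) : Prop :=
  (∀ x ∈ A, ∃ y ∈ B, dist x y ≤ r) ∧ ∀ y ∈ B, ∃ x ∈ A, dist y x ≤ r

def HausdorffLT (A B : Set X) (r : ℝ) : Prop :=
  (∀ x ∈ A, ∃ y ∈ B, dist x y < r) ∧ ∀ y ∈ B, ∃ x ∈ A, dist y x < r

lemma HausdorffLE.trans {A B C : Set X} {r s : ℝ} (hAB : HausdorffLE A B r)
    (hBC : HausdorffLE B C s) : HausdorffLE A C (r + s) := by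
  refine ⟨fun x hx => ?_, fun z hz => ?_⟩
  · obtain ⟨y, hy, hxy⟩ := hAB.1 x hx
    obtain ⟨z, hz, hyz⟩ := hBC.1 y hy
    exact ⟨z, hz, (dist_triangle x y z).trans (add_le_add hxy hyz)⟩
  · obtain ⟨y, hy, hzy⟩ := hBC.2 z hz
    obtain ⟨x, hx, hyx⟩ := hAB.2 y hy
    exact ⟨x, hx, (dist_triangle z y x).trans (by linarith)⟩

lemma HausdorffLE.mono {A B : Set X} {r s : ℝ} (h : HausdorffLE A B r) (hrs : r ≤ s) :
    HausdorffLE A B s :=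
  ⟨fun x hx => (h.1 x hx).imp fun _ hy => ⟨hy.1, hy.2.trans hrs⟩,
    fun y hy => (h.2 y hy).imp fun _ hx => ⟨hx.1, hx.2.trans hrs⟩⟩

lemma HausdorffLE.hausdorffLT {A B : Set X} {r : ℝ} (h : HausdorffLE A B r)
    (hr : ∀ x ∈ A, ∀ y ∈ B, dist x y ≠ r) : HausdorffLT A B r :=
  ⟨fun x hx => (h.1 x hx).imp fun y hy => ⟨hy.1, hy.2.lt_of_ne (hr x hx y hy.1)⟩,
    fun y hy => (h.2 y hy).imp fun x hx =>
      ⟨hx.1, hx.2.lt_of_ne (dist_comm x y ▸ hr x hx.1 y hy)⟩⟩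

lemma HausdorffLT.exists_dist_lt {K C C' : Set X} {r r' : ℝ} (h : HausdorffLT K C r)
    (h' : HausdorffLT K C' r') {c : X} (hc : c ∈ C) : ∃ c' ∈ C', dist c c' < r + r' := by
  obtain ⟨x, hx, hcx⟩ := h.2 c hc
  obtain ⟨c', hc', hxc'⟩ := h'.1 x hx
  exact ⟨c', hc', (dist_triangle c x c').trans_lt (add_lt_add hcx hxc')⟩

lemma HausdorffLE.symm {A B : Set X} {r : ℝ} (h : HausdorffLE A B r) : HausdorffLE B A r :=
  ⟨h.2, h.1⟩

lemma hausdorffLT_self (A : Set X) {r : ℝ} (hr : 0 < r) : HausdorffLT A A r :=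
  ⟨fun x hx => ⟨x, hx, by simpa using hr⟩, fun x hx => ⟨x, hx, by simpa using hr⟩⟩

lemma HausdorffLE.hausdorffDist_le {A B : Set X} {r : ℝ} (h : HausdorffLE A B r)
    (hr : 0 ≤ r) : hausdorffDist A B ≤ r :=
  hausdorffDist_le_of_mem_dist hr h.1 h.2

end Hausdorff

section Cantor

variable {X : Type*}

structure IsCantorScheme (a : ℕ → ℕ) (U : List ℕ → Set X) (N : ℕ) : Prop where
  nonempty : ∀ l, ValidIdx a l → 1 ≤ l.length → l.length ≤ N → (U l).Nonempty
  subset : ∀ l x, ValidIdx a (l ++ [x]) → 1 ≤ l.length → l.length + 1 ≤ N → U (l ++ [x]) ⊆ U l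
  disjoint : ∀ l l', ValidIdx a l → ValidIdx a l' → 1 ≤ l.length → l.length = l'.length →
    l.length ≤ N → l ≠ l' → Disjoint (U l) (U l')

variable {a : ℕ → ℕ} {U : List ℕ → Set X} {N : ℕ}

lemma IsCantorScheme.subset_take (hU : IsCantorScheme a U N) {l : List ℕ} (hl : ValidIdx a l)
    (hlN : l.length ≤ N) {m : ℕ} (hm : 1 ≤ m) : U l ⊆ U (l.take m) := by
  induction l using List.reverseRecOn with
  | nil => simp
  | append_singleton l x ih =>
    simp only [List.length_append, List.length_singleton] at hlN
    rcases Nat.lt_or_ge l.length m with hlm | hml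
    · rw [List.take_of_length_le (by simp; omega)]
    · rw [List.take_append_of_le_length hml]
      exact (hU.subset l x hl (by omega) (by omega)).trans
        (ih (validIdx_append_singleton.1 hl).1 (by omega))

lemma IsCantorScheme.subset_iff_prefix (hU : IsCantorScheme a U N) {i Φ : List ℕ}
    (hi : ValidIdx a i) (hiN : i.length ≤ N) (hΦ : ValidIdx a Φ) (hΦ1 : 1 ≤ Φ.length)
    (hΦi : Φ.length ≤ i.length) : U i ⊆ U Φ ↔ Φ <+: i := by
  refine ⟨fun hsub => ?_, fun hpre => ?_⟩
  · by_contra hnpre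
    have hne : i.take Φ.length ≠ Φ := fun h => hnpre (List.prefix_iff_eq_take.2 h.symm)
    obtain ⟨x, hx⟩ := hU.nonempty i hi (hΦ1.trans hΦi) hiN
    refine Set.disjoint_left.1 (hU.disjoint _ Φ (validIdx_take hi _) hΦ (by simp; omega)
      (by simp; omega) (by simp; omega) hne) (hU.subset_take hi hiN hΦ1 hx) (hsub hx)
  · rw [List.prefix_iff_eq_take.1 hpre]
    exact hU.subset_take hi hiN hΦ1

end Cantor

section Scheme

variable {X : Type*} [MetricSpace X]

/-- The sets of level `2n`; for `n = 0` the single top set, indexed by `[]`, is the whole space. -/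
def topSet (n : ℕ) (U : List ℕ → Set X) (l : List ℕ) : Set X :=
  if n = 0 then Set.univ else U l

def FitsScheme (a : ℕ → ℕ) (U : List ℕ → Set X) (n : ℕ) (S : Set X) : Prop :=
  (∀ x ∈ S, ∃ l ∈ validTuples a (2 * n), x ∈ topSet n U l) ∧
    ∀ l ∈ validTuples a (2 * n), (S ∩ topSet n U l).Nonempty

lemma mem_schemeSet_iff {a : ℕ → ℕ} {U : List ℕ → Set X} {n : ℕ} {K : NonemptyCompacts X} :
    K ∈ SchemeSet a U n ↔ FitsScheme a U n K := by
  rcases eq_or_ne n 0 with rfl | hn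
  · simp only [SchemeSet, if_true, Set.mem_univ, true_iff, FitsScheme, topSet, Set.inter_univ]
    refine ⟨fun x _ => ⟨[], by simp [show ValidIdx a [] from nofun]⟩, fun _ _ => K.nonempty⟩
  · simp only [SchemeSet, if_neg hn, FitsScheme, topSet, mem_validTuples, Set.mem_ofPred_eq,
      Set.subset_def, Set.mem_iUnion₂, exists_prop]
    exact and_congr Iff.rfl ⟨fun h l hl => h l hl.1 hl.2, fun h l hv hl => h l ⟨hv, hl⟩⟩

variable {Ψ : ℕ → List ℕ} {n : ℕ} {a : ℕ → ℕ} {U : List ℕ → Set X} {b : ℕ → ℝ}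

lemma IsBalancedScheme.one_le (hπ : IsBalancedScheme Ψ n a U b) {k : ℕ} (hk : k < 2 * n) :
    1 ≤ a k :=
  hπ.1 k hk

lemma IsBalancedScheme.isOpen_topSet (hπ : IsBalancedScheme Ψ n a U b) {l : List ℕ}
    (hl : l ∈ validTuples a (2 * n)) : IsOpen (topSet n U l) := by
  rw [mem_validTuples] at hl
  unfold topSet
  split_ifs with hn
  · exact isOpen_univ
  · exact (hπ.2.2.2.1 l hl.1 (by omega) (by omega)).2

lemma IsBalancedScheme.topSet_nonempty [Nonempty X] (hπ : IsBalancedScheme Ψ n a U b)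
    {l : List ℕ} (hl : l ∈ validTuples a (2 * n)) : (topSet n U l).Nonempty := by
  rw [mem_validTuples] at hl
  unfold topSet
  split_ifs with hn
  · exact Set.univ_nonempty
  · exact (hπ.2.2.2.1 l hl.1 (by omega) (by omega)).1

lemma IsBalancedScheme.validTuples_nonempty (hπ : IsBalancedScheme Ψ n a U b) :
    (validTuples a (2 * n)).Nonempty :=
  ⟨_, mem_validTuples.2 ⟨validIdx_replicate fun _ => hπ.one_le, List.length_replicate⟩⟩

lemma FitsScheme.nonempty (hπ : IsBalancedScheme Ψ n a U b) {S : Set X}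
    (hS : FitsScheme a U n S) : S.Nonempty :=
  (hS.2 _ hπ.validTuples_nonempty.choose_spec).mono Set.inter_subset_left

lemma PhiIdx_spec (Ψ : ℕ → List ℕ) {a : ℕ → ℕ} (ha : 1 ≤ a 0) (m : ℕ) :
    1 ≤ (PhiIdx Ψ a m).length ∧ (PhiIdx Ψ a m).length ≤ 2 * m + 1 ∧ ValidIdx a (PhiIdx Ψ a m) := by
  unfold PhiIdx
  split_ifs with h
  · exact h
  · refine ⟨by simp, by simp, fun k hk => ?_⟩
    obtain rfl : k = 0 := by simpa using hk
    simp only [List.get_eq_getElem, List.getElem_singleton]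
    exact ha

end Scheme

section Extension

variable {X : Type*} [MetricSpace X]

def extendBranching (n : ℕ) (a : ℕ → ℕ) (A B : ℕ) (k : ℕ) : ℕ :=
  if k < 2 * n then a k else if k = 2 * n then A else B

def extendSets (n : ℕ) (U : List ℕ → Set X) (pc qc : List ℕ → X) (ρ r : ℝ) (l : List ℕ) :
    Set X :=
  if l.length ≤ 2 * n then U l else if l.length = 2 * n + 1 then ball (pc l) ρ else ball (qc l) r

def extendRadii (n : ℕ) (b : ℕ → ℝ) (ρ r : ℝ) (k : ℕ) : ℝ :=
  if k ≤ 2 * n then b k else if k = 2 * n + 1 then 2 * ρ else 2 * r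

variable {Ψ : ℕ → List ℕ} {n : ℕ} {a : ℕ → ℕ} {U : List ℕ → Set X} {b : ℕ → ℝ} {A B : ℕ}
  {pc qc : List ℕ → X} {ρ r : ℝ}

lemma extendBranching_of_lt {k : ℕ} (hk : k < 2 * n) : extendBranching n a A B k = a k :=
  if_pos hk

@[simp] lemma extendBranching_two_mul : extendBranching n a A B (2 * n) = A := by
  simp [extendBranching]

@[simp] lemma extendBranching_two_mul_add_one : extendBranching n a A B (2 * n + 1) = B := by
  simp [extendBranching]

lemma validIdx_extendBranching_iff {l : List ℕ} (hl : l.length ≤ 2 * n) :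
    ValidIdx (extendBranching n a A B) l ↔ ValidIdx a l :=
  ⟨fun h => validIdx_congr h fun k hk => extendBranching_of_lt (by omega),
    fun h => validIdx_congr h fun k hk => (extendBranching_of_lt (by omega)).symm⟩

lemma PhiIdx_extendBranching {m : ℕ} (hm : m < n) :
    PhiIdx Ψ (extendBranching n a A B) m = PhiIdx Ψ a m := by
  unfold PhiIdx
  refine if_congr (and_congr_right fun _ => and_congr_right fun h => ?_) rfl rfl
  exact validIdx_extendBranching_iff (by omega)

lemma extendSets_of_le {l : List ℕ} (hl : l.length ≤ 2 * n) :
    extendSets n U pc qc ρ r l = U l :=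
  if_pos hl

lemma extendSets_of_eq_succ {l : List ℕ} (hl : l.length = 2 * n + 1) :
    extendSets n U pc qc ρ r l = ball (pc l) ρ := by
  simp [extendSets, hl]

lemma extendSets_of_eq_add_two {l : List ℕ} (hl : l.length = 2 * n + 2) :
    extendSets n U pc qc ρ r l = ball (qc l) r := by
  simp [extendSets, hl]

lemma extendRadii_of_le {k : ℕ} (hk : k ≤ 2 * n) : extendRadii n b ρ r k = b k :=
  if_pos hk

@[simp] lemma extendRadii_succ : extendRadii n b ρ r (2 * n + 1) = 2 * ρ := by
  simp [extendRadii]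

@[simp] lemma extendRadii_add_two : extendRadii n b ρ r (2 * n + 2) = 2 * r := by
  simp [extendRadii]

lemma IsBalancedScheme.branching_extend (hπ : IsBalancedScheme Ψ n a U b) (hA2 : 2 ≤ A)
    (hA : 2 * n * ∏ i ∈ Finset.range (2 * n), a i ≤ A)
    (hB : (2 * n + 1) * ((∏ i ∈ Finset.range (2 * n), a i) * A) ≤ B) :
    (∀ k < 2 * (n + 1), 1 ≤ extendBranching n a A B k) ∧
      (1 ≤ n + 1 → 2 ≤ extendBranching n a A B 0) ∧
      ∀ k, 1 ≤ k → k < 2 * (n + 1) →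
        k * ∏ i ∈ Finset.range k, extendBranching n a A B i ≤ extendBranching n a A B k := by
  have hprod : ∀ k ≤ 2 * n, ∏ i ∈ Finset.range k, extendBranching n a A B i =
      ∏ i ∈ Finset.range k, a i := fun k hk =>
    Finset.prod_congr rfl fun i hi => extendBranching_of_lt (by simp at hi; omega)
  have hprod_pos : 0 < ∏ i ∈ Finset.range (2 * n), a i :=
    Finset.prod_pos fun i hi => hπ.one_le (by simpa using hi)
  have hAB : A ≤ B := calc
    A ≤ (∏ i ∈ Finset.range (2 * n), a i) * A := Nat.le_mul_of_pos_left A hprod_pos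
    _ ≤ _ := Nat.le_mul_of_pos_left _ (by omega)
    _ ≤ B := hB
  refine ⟨fun k hk => ?_, fun _ => ?_, fun k hk1 hk2 => ?_⟩
  · rcases Nat.lt_or_ge k (2 * n) with h | h
    · rw [extendBranching_of_lt h]; exact hπ.one_le h
    · obtain rfl | rfl : k = 2 * n ∨ k = 2 * n + 1 := by omega
      all_goals simp; omega
  · rcases Nat.eq_zero_or_pos n with rfl | hn
    · simpa [extendBranching] using hA2
    · rw [extendBranching_of_lt (by omega)]; exact hπ.2.1 hn
  · rcases Nat.lt_or_ge k (2 * n) with h | h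
    · rw [hprod k h.le, extendBranching_of_lt h]; exact hπ.2.2.1 k hk1 h
    · obtain rfl | rfl : k = 2 * n ∨ k = 2 * n + 1 := by omega
      · rw [hprod _ le_rfl, extendBranching_two_mul]; exact hA
      · rw [Finset.prod_range_succ, hprod _ le_rfl, extendBranching_two_mul,
          extendBranching_two_mul_add_one]
        exact hB

/-- Level `2n + 1` of the extension consists of balls of radius `ρ` about the points `pc t`,
level `2n + 2` of balls of radius `r` about the points `qc u`. Condition (5) at level `2n + 1`
is obtained by keeping the children of descendants of `Φ` apart by `δ` and all other children
within `δ / 8` of their parent's centre. -/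
structure IsBallPlacement (Ψ : ℕ → List ℕ) (n : ℕ) (a : ℕ → ℕ) (U : List ℕ → Set X) (A B : ℕ)
    (pc qc : List ℕ → X) (ρ r δ : ℝ) : Prop where
  ρ_pos : 0 < ρ
  r_pos : 0 < r
  closedBall_subset : ∀ t ∈ validTuples (extendBranching n a A B) (2 * n + 1),
    closedBall (pc t) ρ ⊆ topSet n U t.dropLast
  pc_separated : ∀ t ∈ validTuples (extendBranching n a A B) (2 * n + 1),
    ∀ t' ∈ validTuples (extendBranching n a A B) (2 * n + 1), t ≠ t' →
      8 * ρ ≤ dist (pc t) (pc t')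
  qc_near : ∀ u ∈ validTuples (extendBranching n a A B) (2 * n + 2),
    dist (qc u) (pc u.dropLast) + r < ρ
  qc_separated : ∀ u ∈ validTuples (extendBranching n a A B) (2 * n + 2),
    ∀ u' ∈ validTuples (extendBranching n a A B) (2 * n + 2), u ≠ u' →
      8 * r ≤ dist (qc u) (qc u')
  r_le : 8 * r ≤ δ
  qc_phi_separated : ∀ u ∈ validTuples (extendBranching n a A B) (2 * n + 2),
    ∀ u' ∈ validTuples (extendBranching n a A B) (2 * n + 2),
    PhiIdx Ψ (extendBranching n a A B) n <+: u.dropLast →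
    PhiIdx Ψ (extendBranching n a A B) n <+: u'.dropLast → u ≠ u' → δ ≤ dist (qc u) (qc u')
  qc_not_phi_near : ∀ u ∈ validTuples (extendBranching n a A B) (2 * n + 2),
    ¬ PhiIdx Ψ (extendBranching n a A B) n <+: u.dropLast → dist (qc u) (pc u.dropLast) < δ / 8

variable {δ : ℝ}

lemma IsBalancedScheme.extendSets_nonempty (hπ : IsBalancedScheme Ψ n a U b)
    (hP : IsBallPlacement Ψ n a U A B pc qc ρ r δ) (l : List ℕ)
    (hl : ValidIdx (extendBranching n a A B) l) (h1 : 1 ≤ l.length) (h2 : l.length ≤ 2 * (n + 1)) :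
    (extendSets n U pc qc ρ r l).Nonempty ∧ IsOpen (extendSets n U pc qc ρ r l) := by
  rcases Nat.lt_or_ge (2 * n) l.length with h | h
  · obtain h | h : l.length = 2 * n + 1 ∨ l.length = 2 * n + 2 := by omega
    · rw [extendSets_of_eq_succ h]; exact ⟨nonempty_ball.2 hP.ρ_pos, isOpen_ball⟩
    · rw [extendSets_of_eq_add_two h]; exact ⟨nonempty_ball.2 hP.r_pos, isOpen_ball⟩
  · rw [extendSets_of_le h]
    exact hπ.2.2.2.1 l ((validIdx_extendBranching_iff h).1 hl) h1 h

lemma IsBalancedScheme.closure_extendSets_subset (hπ : IsBalancedScheme Ψ n a U b)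
    (hP : IsBallPlacement Ψ n a U A B pc qc ρ r δ) (l : List ℕ) (x : ℕ)
    (hl : ValidIdx (extendBranching n a A B) (l ++ [x]))
    (h1 : 1 ≤ l.length) (h2 : l.length + 1 ≤ 2 * (n + 1)) :
    closure (extendSets n U pc qc ρ r (l ++ [x])) ⊆ extendSets n U pc qc ρ r l := by
  have hlen : (l ++ [x]).length = l.length + 1 := by simp
  rcases Nat.lt_or_ge l.length (2 * n) with h | h
  · rw [extendSets_of_le (by omega), extendSets_of_le (by omega)]
    exact hπ.2.2.2.2.1 l x ((validIdx_extendBranching_iff (by omega)).1 hl) h1 (by omega)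
  obtain h | h : l.length = 2 * n ∨ l.length = 2 * n + 1 := by omega
  · have hn : n ≠ 0 := by omega
    have := hP.closedBall_subset (l ++ [x]) (mem_validTuples.2 ⟨hl, by omega⟩)
    rw [List.dropLast_concat, topSet, if_neg hn] at this
    rw [extendSets_of_eq_succ (by omega), extendSets_of_le h.le]
    exact closure_ball_subset_closedBall.trans this
  · have := hP.qc_near (l ++ [x]) (mem_validTuples.2 ⟨hl, by omega⟩)
    rw [List.dropLast_concat] at this
    rw [extendSets_of_eq_add_two (by omega), extendSets_of_eq_succ h]
    refine closure_ball_subset_closedBall.trans fun y hy => ?_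
    rw [mem_closedBall] at hy
    rw [mem_ball]
    linarith [dist_triangle y (qc (l ++ [x])) (pc l)]

lemma IsBalancedScheme.diam_extendSets_le (hπ : IsBalancedScheme Ψ n a U b)
    (hP : IsBallPlacement Ψ n a U A B pc qc ρ r δ) (l : List ℕ)
    (hl : ValidIdx (extendBranching n a A B) l) (h1 : 1 ≤ l.length) (h2 : l.length ≤ 2 * (n + 1)) :
    diam (extendSets n U pc qc ρ r l) ≤ extendRadii n b ρ r l.length := by
  rcases Nat.lt_or_ge (2 * n) l.length with h | h
  · obtain h | h : l.length = 2 * n + 1 ∨ l.length = 2 * n + 2 := by omega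
    · rw [extendSets_of_eq_succ h, h, extendRadii_succ]; exact diam_ball hP.ρ_pos.le
    · rw [extendSets_of_eq_add_two h, h, extendRadii_add_two]; exact diam_ball hP.r_pos.le
  · rw [extendSets_of_le h, extendRadii_of_le h]
    exact hπ.2.2.2.2.2.2.1 l ((validIdx_extendBranching_iff h).1 hl) h1 h

lemma IsBalancedScheme.extendSets_separated (hπ : IsBalancedScheme Ψ n a U b)
    (hP : IsBallPlacement Ψ n a U A B pc qc ρ r δ)
    (l l' : List ℕ) (hl : ValidIdx (extendBranching n a A B) l)
    (hl' : ValidIdx (extendBranching n a A B) l') (h1 : 1 ≤ l.length) (hll' : l.length = l'.length)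
    (h2 : l.length ≤ 2 * (n + 1)) (hne : l ≠ l') :
    2 * extendRadii n b ρ r l.length <
      SetDist (extendSets n U pc qc ρ r l) (extendSets n U pc qc ρ r l') := by
  rcases Nat.lt_or_ge (2 * n) l.length with h | h
  · obtain h | h : l.length = 2 * n + 1 ∨ l.length = 2 * n + 2 := by omega
    · rw [extendSets_of_eq_succ h, extendSets_of_eq_succ (hll' ▸ h), h, extendRadii_succ]
      linarith [hP.ρ_pos, sub_le_setDist_ball (x := pc l) (y := pc l') hP.ρ_pos hP.ρ_pos,
        hP.pc_separated l (mem_validTuples.2 ⟨hl, h⟩) l' (mem_validTuples.2 ⟨hl', hll' ▸ h⟩) hne]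
    · rw [extendSets_of_eq_add_two h, extendSets_of_eq_add_two (hll' ▸ h), h, extendRadii_add_two]
      linarith [hP.r_pos, sub_le_setDist_ball (x := qc l) (y := qc l') hP.r_pos hP.r_pos,
        hP.qc_separated l (mem_validTuples.2 ⟨hl, h⟩) l' (mem_validTuples.2 ⟨hl', hll' ▸ h⟩) hne]
  · rw [extendSets_of_le h, extendSets_of_le (hll' ▸ h), extendRadii_of_le h]
    exact hπ.2.2.2.2.2.2.2.1 l l' ((validIdx_extendBranching_iff h).1 hl)
      ((validIdx_extendBranching_iff (hll' ▸ h)).1 hl') h1 hll' h hne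

lemma IsBalancedScheme.extendRadii_pos (hπ : IsBalancedScheme Ψ n a U b)
    (hP : IsBallPlacement Ψ n a U A B pc qc ρ r δ) (k : ℕ) (hk : 1 ≤ k) :
    0 < extendRadii n b ρ r k := by
  unfold extendRadii
  split_ifs
  · exact hπ.2.2.2.2.2.1 k hk (by assumption)
  · linarith [hP.ρ_pos]
  · linarith [hP.r_pos]

lemma IsBalancedScheme.isCantorScheme_extendSets (hπ : IsBalancedScheme Ψ n a U b)
    (hP : IsBallPlacement Ψ n a U A B pc qc ρ r δ) :
    IsCantorScheme (extendBranching n a A B) (extendSets n U pc qc ρ r) (2 * (n + 1)) where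
  nonempty l hl h1 h2 := (hπ.extendSets_nonempty hP l hl h1 h2).1
  subset l x hl h1 h2 :=
    subset_closure.trans (hπ.closure_extendSets_subset hP l x hl h1 h2)
  disjoint l l' hl hl' h1 hll' h2 hne := by
    refine disjoint_of_setDist_pos (lt_trans ?_
      (hπ.extendSets_separated hP l l' hl hl' h1 hll' h2 hne))
    linarith [hπ.extendRadii_pos hP _ h1]

lemma IsBalancedScheme.one_le_extendBranching_zero (hπ : IsBalancedScheme Ψ n a U b)
    (hA : 1 ≤ A) : 1 ≤ extendBranching n a A B 0 := by
  rcases Nat.eq_zero_or_pos n with rfl | hn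
  · simpa [extendBranching] using hA
  · rw [extendBranching_of_lt (by omega)]; exact hπ.one_le (by omega)

lemma IsBalancedScheme.extendSets_phi_separated_of_lt (hπ : IsBalancedScheme Ψ n a U b) {m : ℕ}
    (hmn : m < n) (i j : List ℕ)
    (hi : ValidIdx (extendBranching n a A B) i) (hj : ValidIdx (extendBranching n a A B) j)
    (hil : i.length = 2 * m + 1) (hjl : j.length = 2 * m + 1)
    (hiΦ : extendSets n U pc qc ρ r i ⊆
      extendSets n U pc qc ρ r (PhiIdx Ψ (extendBranching n a A B) m))
    (hjΦ : ¬ extendSets n U pc qc ρ r j ⊆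
      extendSets n U pc qc ρ r (PhiIdx Ψ (extendBranching n a A B) m))
    (s t : ℕ) (hs : s < extendBranching n a A B (2 * m + 1))
    (ht : t < extendBranching n a A B (2 * m + 1)) (hst : s ≠ t) :
    diam (⋃ u ∈ Finset.range (extendBranching n a A B (2 * m + 1)),
        extendSets n U pc qc ρ r (j ++ [u])) <
      SetDist (extendSets n U pc qc ρ r (i ++ [s])) (extendSets n U pc qc ρ r (i ++ [t])) := by
  have hΦ := (PhiIdx_spec Ψ (hπ.one_le (by omega)) m).2.1
  rw [PhiIdx_extendBranching hmn] at hiΦ hjΦ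
  rw [extendBranching_of_lt (by omega)] at hs ht ⊢
  simp only [extendSets_of_le (show (PhiIdx Ψ a m).length ≤ 2 * n by omega),
    extendSets_of_le (show i.length ≤ 2 * n by omega),
    extendSets_of_le (show j.length ≤ 2 * n by omega)] at hiΦ hjΦ
  simp only [extendSets_of_le (show (j ++ [_]).length ≤ 2 * n by simp; omega),
    extendSets_of_le (show (i ++ [_]).length ≤ 2 * n by simp; omega)]
  exact hπ.2.2.2.2.2.2.2.2 m i j (by omega) ((validIdx_extendBranching_iff (by omega)).1 hi)
    ((validIdx_extendBranching_iff (by omega)).1 hj) hil hjl hiΦ hjΦ s t hs ht hst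

lemma IsBalancedScheme.extendSets_phi_separated_top (hπ : IsBalancedScheme Ψ n a U b)
    (hA : 1 ≤ A) (hP : IsBallPlacement Ψ n a U A B pc qc ρ r δ) (i j : List ℕ)
    (hi : ValidIdx (extendBranching n a A B) i) (hj : ValidIdx (extendBranching n a A B) j)
    (hil : i.length = 2 * n + 1) (hjl : j.length = 2 * n + 1)
    (hiΦ : extendSets n U pc qc ρ r i ⊆
      extendSets n U pc qc ρ r (PhiIdx Ψ (extendBranching n a A B) n))
    (hjΦ : ¬ extendSets n U pc qc ρ r j ⊆
      extendSets n U pc qc ρ r (PhiIdx Ψ (extendBranching n a A B) n))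
    (s t : ℕ) (hs : s < extendBranching n a A B (2 * n + 1))
    (ht : t < extendBranching n a A B (2 * n + 1)) (hst : s ≠ t) :
    diam (⋃ u ∈ Finset.range (extendBranching n a A B (2 * n + 1)),
        extendSets n U pc qc ρ r (j ++ [u])) <
      SetDist (extendSets n U pc qc ρ r (i ++ [s])) (extendSets n U pc qc ρ r (i ++ [t])) := by
  set a' := extendBranching n a A B
  set U' := extendSets n U pc qc ρ r
  have hcantor := hπ.isCantorScheme_extendSets hP
  obtain ⟨hΦ1, hΦlen, hΦ⟩ := PhiIdx_spec Ψ (hπ.one_le_extendBranching_zero (B := B) hA) n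
  have hiΦ' := (hcantor.subset_iff_prefix hi (by omega) hΦ hΦ1 (by omega)).1 hiΦ
  have hjΦ' : ¬ _ <+: j := mt (hcantor.subset_iff_prefix hj (by omega) hΦ hΦ1 (by omega)).2 hjΦ
  have hB : a' (2 * n + 1) = B := extendBranching_two_mul_add_one
  rw [hB] at hs ht ⊢
  have hchild : ∀ {l}, ValidIdx a' l → l.length = 2 * n + 1 → ∀ {u}, u < B →
      l ++ [u] ∈ validTuples a' (2 * n + 2) := fun hl hl' u hu =>
    append_singleton_mem_validTuples (mem_validTuples.2 ⟨hl, hl'⟩) (by rwa [hB])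
  have hδ_le : δ ≤ dist (qc (i ++ [s])) (qc (i ++ [t])) :=
    hP.qc_phi_separated _ (hchild hi hil hs) _ (hchild hi hil ht) (by simpa using hiΦ')
      (by simpa using hiΦ') (by simpa using hst)
  have hunion : (⋃ u ∈ Finset.range B, U' (j ++ [u])) ⊆ ball (pc j) (δ / 8 + r) := by
    refine Set.iUnion₂_subset fun u hu => ?_
    rw [Finset.mem_range] at hu
    have hclose := hP.qc_not_phi_near _ (hchild hj hjl hu) (by simpa using hjΦ')
    rw [List.dropLast_concat] at hclose
    simp only [U', extendSets_of_eq_add_two (show (j ++ [u]).length = 2 * n + 2 by simp; omega)]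
    exact ball_subset_ball' (by linarith)
  calc diam (⋃ u ∈ Finset.range B, U' (j ++ [u]))
      ≤ 2 * (δ / 8 + r) :=
        (diam_mono hunion isBounded_ball).trans (diam_ball (by linarith [hP.r_pos, hP.r_le]))
    _ < dist (qc (i ++ [s])) (qc (i ++ [t])) - r - r := by linarith [hP.r_pos, hP.r_le]
    _ ≤ SetDist (U' (i ++ [s])) (U' (i ++ [t])) := by
      simp only [U', extendSets_of_eq_add_two (show (i ++ [_]).length = 2 * n + 2 by simp; omega)]
      exact sub_le_setDist_ball hP.r_pos hP.r_pos

theorem IsBalancedScheme.extend (hπ : IsBalancedScheme Ψ n a U b) (hA2 : 2 ≤ A)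
    (hA : 2 * n * ∏ i ∈ Finset.range (2 * n), a i ≤ A)
    (hB : (2 * n + 1) * ((∏ i ∈ Finset.range (2 * n), a i) * A) ≤ B)
    (hP : IsBallPlacement Ψ n a U A B pc qc ρ r δ) :
    IsBalancedScheme Ψ (n + 1) (extendBranching n a A B) (extendSets n U pc qc ρ r)
      (extendRadii n b ρ r) :=
  let ⟨h1, h2, h3⟩ := hπ.branching_extend hA2 hA hB
  ⟨h1, h2, h3, hπ.extendSets_nonempty hP, hπ.closure_extendSets_subset hP,
    fun k hk _ => hπ.extendRadii_pos hP k hk, hπ.diam_extendSets_le hP,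
    hπ.extendSets_separated hP, fun m i j hm hi hj hil hjl => by
      rcases Nat.lt_or_ge m n with hmn | hmn
      · exact hπ.extendSets_phi_separated_of_lt hmn i j hi hj hil hjl
      · obtain rfl : m = n := by omega
        exact hπ.extendSets_phi_separated_top (by omega) hP i j hi hj hil hjl⟩

lemma schemeConsistent_extend :
    SchemeConsistent n a (extendBranching n a A B) U (extendSets n U pc qc ρ r) :=
  ⟨fun _ hk => extendBranching_of_lt hk, fun _ _ _ hl => extendSets_of_le hl⟩

lemma mem_schemeSet_extendSets_iff {K : NonemptyCompacts X} :
    K ∈ SchemeSet (extendBranching n a A B) (extendSets n U pc qc ρ r) (n + 1) ↔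
      HausdorffLT (K : Set X)
        ((validTuples (extendBranching n a A B) (2 * n + 2)).image qc : Set X) r := by
  have htop : ∀ u ∈ validTuples (extendBranching n a A B) (2 * n + 2),
      topSet (n + 1) (extendSets n U pc qc ρ r) u = ball (qc u) r := fun u hu => by
    rw [topSet, if_neg n.succ_ne_zero, extendSets_of_eq_add_two (mem_validTuples.1 hu).2]
  rw [mem_schemeSet_iff, FitsScheme, HausdorffLT, show 2 * (n + 1) = 2 * n + 2 by ring]
  refine and_congr ⟨fun h x hx => ?_, fun h x hx => ?_⟩ ⟨fun h c hc => ?_, fun h u hu => ?_⟩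
  · obtain ⟨u, hu, hxu⟩ := h x hx
    exact ⟨qc u, Finset.mem_image_of_mem qc hu, by rwa [htop u hu, mem_ball] at hxu⟩
  · obtain ⟨c, hc, hxc⟩ := h x hx
    obtain ⟨u, hu, rfl⟩ := Finset.mem_image.1 hc
    exact ⟨u, hu, by rwa [htop u hu, mem_ball]⟩
  · obtain ⟨u, hu, rfl⟩ := Finset.mem_image.1 hc
    obtain ⟨x, hxK, hxu⟩ := h u hu
    rw [htop u hu, mem_ball] at hxu
    exact ⟨x, hxK, by rwa [dist_comm]⟩
  · obtain ⟨x, hxK, hxu⟩ := h (qc u) (Finset.mem_image_of_mem qc hu)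
    exact ⟨x, hxK, by rwa [htop u hu, mem_ball, dist_comm]⟩

end Extension

section Placement

variable {X : Type*} [MetricSpace X]

lemma eventually_mul_lt (k : ℝ) {c : ℝ} (hc : 0 < c) : ∀ᶠ ρ in 𝓝[>] (0 : ℝ), k * ρ < c :=
  (((continuous_const_mul k).tendsto' 0 0 (mul_zero k)).eventually
    (eventually_lt_nhds hc)).filter_mono nhdsWithin_le_nhds

lemma eventually_mul_le_dist {ι : Type*} {s : Finset ι} {p : ι → X} (hp : Set.InjOn p s)
    (k : ℝ) : ∀ᶠ ρ in 𝓝[>] (0 : ℝ), ∀ i ∈ s, ∀ j ∈ s, i ≠ j → k * ρ ≤ dist (p i) (p j) := by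
  refine (eventually_all_finset s).2 fun i hi => (eventually_all_finset s).2 fun j hj => ?_
  by_cases hij : i = j
  · exact Eventually.of_forall fun _ h => absurd hij h
  · filter_upwards [eventually_mul_lt k (dist_pos.2 fun h => hij (hp hi hj h))] with ρ hρ _
    exact hρ.le

lemma exists_separated_near [Nonempty X] (hperf : ∀ x : X, (𝓝[≠] x).NeBot) {ι : Type*}
    (s : Finset ι) {O : ι → Set X} {x : ι → X} (hO : ∀ i ∈ s, IsOpen (O i) ∧ x i ∈ O i)
    {η : ℝ} (hη : 0 < η) :
    ∃ (p : ι → X) (ρ : ℝ), 0 < ρ ∧ ρ < η ∧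
      (∀ i ∈ s, dist (p i) (x i) < η ∧ closedBall (p i) ρ ⊆ O i) ∧
      ∀ i ∈ s, ∀ j ∈ s, i ≠ j → 8 * ρ ≤ dist (p i) (p j) := by
  have hball : ∀ i ∈ s, ∃ μ > 0, ball (x i) (2 * μ) ⊆ O i := fun i hi => by
    obtain ⟨ε, hε, hεO⟩ := isOpen_iff.1 (hO i hi).1 _ (hO i hi).2
    exact ⟨ε / 2, by positivity, by rwa [mul_div_cancel₀ _ two_ne_zero]⟩
  choose! μ hμ hμO using hball
  obtain ⟨p, hp_inj, hp⟩ := exists_injOn_forall_mem_notMem hperf s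
    (fun i => ball (x i) (min η (μ i))) (fun i hi => ⟨isOpen_ball,
      nonempty_ball.2 (lt_min hη (hμ i hi))⟩) ∅
  have hρη : ∀ᶠ ρ in 𝓝[>] (0 : ℝ), ρ < η := by simpa using eventually_mul_lt 1 hη
  have hρμ : ∀ᶠ ρ in 𝓝[>] (0 : ℝ), ∀ i ∈ s, ρ < μ i :=
    (eventually_all_finset s).2 fun i hi => by simpa using eventually_mul_lt 1 (hμ i hi)
  have hρ := (hρη.and hρμ).and (eventually_mul_le_dist hp_inj 8)
  obtain ⟨ρ, ⟨⟨hρη, hρμ⟩, hsep⟩, hρ_pos⟩ := (hρ.and self_mem_nhdsWithin).exists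
  refine ⟨p, ρ, hρ_pos, hρη, fun i hi => ?_, hsep⟩
  have hpx : dist (p i) (x i) < min η (μ i) := mem_ball.1 (hp i hi).1
  refine ⟨hpx.trans_le (min_le_left _ _), fun y hy => hμO i hi (mem_ball.2 ?_)⟩
  linarith [dist_triangle y (p i) (x i), mem_closedBall.1 hy, hρμ i hi, min_le_right η (μ i)]

lemma exists_clustered_near [Nonempty X] (hperf : ∀ x : X, (𝓝[≠] x).NeBot) {ι : Type*}
    (s : Finset ι) (c : ι → X) (spread : ι → Prop) (w : X) {ρ : ℝ} (hρ : 0 < ρ) :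
    ∃ (q : ι → X) (δ : ℝ), 0 < δ ∧ Set.InjOn q s ∧ (∀ i ∈ s, dist (q i) (c i) < ρ ∧ q i ≠ w) ∧
      (∀ i ∈ s, ∀ j ∈ s, spread i → spread j → i ≠ j → δ ≤ dist (q i) (q j)) ∧
      ∀ i ∈ s, ¬ spread i → dist (q i) (c i) < δ / 8 := by
  classical
  obtain ⟨q₁, hq₁_inj, hq₁⟩ := exists_injOn_forall_mem_notMem hperf (s.filter spread)
    (fun i => ball (c i) ρ) (fun _ _ => ⟨isOpen_ball, nonempty_ball.2 hρ⟩) {w}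
  obtain ⟨δ, ⟨hδρ, hδ_sep⟩, hδ_pos⟩ :=
    (((eventually_mul_lt (1 / 8) hρ).and (eventually_mul_le_dist hq₁_inj 1)).and
      self_mem_nhdsWithin).exists
  -- `δ` is known only once the spread points are placed.
  obtain ⟨q₂, hq₂_inj, hq₂⟩ := exists_injOn_forall_mem_notMem hperf (s.filter (¬ spread ·))
    (fun i => ball (c i) (δ / 8)) (fun _ _ => ⟨isOpen_ball, nonempty_ball.2 (by
      have : 0 < δ := hδ_pos; positivity)⟩) ({w} ∪ (s.filter spread).image q₁)
  have hq₂_notMem : ∀ i ∈ s, ¬ spread i → ∀ j ∈ s, spread j → q₂ i ≠ q₁ j :=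
    fun i hi hsi j hj hsj h =>
    (hq₂ i (Finset.mem_filter.2 ⟨hi, hsi⟩)).2
      (Finset.mem_union_right _ (Finset.mem_image.2 ⟨j, Finset.mem_filter.2 ⟨hj, hsj⟩, h.symm⟩))
  refine ⟨fun i => if spread i then q₁ i else q₂ i, δ, hδ_pos, fun i hi j hj hij => ?_,
    fun i hi => ?_, fun i hi j hj hsi hsj hne => ?_, fun i hi hsi => ?_⟩
  · by_cases hsi : spread i <;> by_cases hsj : spread j <;> simp only [hsi, hsj, if_true,
      if_false] at hij
    · exact hq₁_inj (by simpa using ⟨hi, hsi⟩) (by simpa using ⟨hj, hsj⟩) hij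
    · exact absurd hij.symm (hq₂_notMem j hj hsj i hi hsi)
    · exact absurd hij (hq₂_notMem i hi hsi j hj hsj)
    · exact hq₂_inj (by simpa using ⟨hi, hsi⟩) (by simpa using ⟨hj, hsj⟩) hij
  · by_cases hsi : spread i <;> simp only [hsi, if_true, if_false]
    · obtain ⟨h₁, h₂⟩ := hq₁ i (Finset.mem_filter.2 ⟨hi, hsi⟩)
      exact ⟨mem_ball.1 h₁, by simpa using h₂⟩
    · obtain ⟨h₁, h₂⟩ := hq₂ i (Finset.mem_filter.2 ⟨hi, hsi⟩)
      exact ⟨(mem_ball.1 h₁).trans (by linarith), fun h => h₂ (by simp [h])⟩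
  · simpa [hsi, hsj] using hδ_sep i (Finset.mem_filter.2 ⟨hi, hsi⟩) j
      (Finset.mem_filter.2 ⟨hj, hsj⟩) hne
  · simpa [hsi] using (hq₂ i (Finset.mem_filter.2 ⟨hi, hsi⟩)).1

end Placement

section Anchor

variable {X : Type*} {n : ℕ} {a : ℕ → ℕ} {U : List ℕ → Set X} {A B : ℕ}

lemma validTuples_extendBranching :
    validTuples (extendBranching n a A B) (2 * n) = validTuples a (2 * n) := by
  ext l
  simp only [mem_validTuples]
  exact ⟨fun h => ⟨(validIdx_extendBranching_iff h.2.le).1 h.1, h.2⟩,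
    fun h => ⟨(validIdx_extendBranching_iff h.2.le).2 h.1, h.2⟩⟩

lemma FitsScheme.exists_anchor [Nonempty X] {T : Finset X} (hT : FitsScheme a U n T)
    (hA : T.card ≤ A) (B : ℕ) :
    ∃ anchor : List ℕ → X,
      (∀ t ∈ validTuples (extendBranching n a A B) (2 * n + 1),
        anchor t ∈ T ∧ anchor t ∈ topSet n U t.dropLast) ∧
      ∀ x ∈ T, ∃ t ∈ validTuples (extendBranching n a A B) (2 * n + 1), anchor t = x := by
  classical
  have hsurj : ∀ l ∈ validTuples a (2 * n), ∃ g : ℕ → X,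
      (∀ s, g s ∈ T.filter (· ∈ topSet n U l)) ∧
      ∀ x ∈ T.filter (· ∈ topSet n U l), ∃ s < A, g s = x := fun l hl => by
    obtain ⟨x, hxT, hxl⟩ := hT.2 l hl
    exact Finset.exists_surjOn_Iio ⟨x, Finset.mem_filter.2 ⟨hxT, hxl⟩⟩
      ((Finset.card_filter_le _ _).trans hA)
  choose! g hg_mem hg_surj using hsurj
  refine ⟨fun t => g t.dropLast (t.getLastD 0), fun t ht => ?_, fun x hx => ?_⟩
  · have hl := validTuples_extendBranching (A := A) (B := B) ▸ dropLast_mem_validTuples ht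
    simpa using hg_mem _ hl (t.getLastD 0)
  · obtain ⟨l, hl, hxl⟩ := hT.1 x hx
    obtain ⟨s, hs, rfl⟩ := hg_surj l hl x (Finset.mem_filter.2 ⟨hx, hxl⟩)
    refine ⟨l ++ [s], append_singleton_mem_validTuples (by rwa [validTuples_extendBranching])
      (by simpa using hs), by simp⟩

end Anchor

section BallExtension

variable {X : Type*} [MetricSpace X] {Ψ : ℕ → List ℕ} {n : ℕ} {a : ℕ → ℕ}
  {U : List ℕ → Set X} {b : ℕ → ℝ} {A B : ℕ}

lemma IsBalancedScheme.exists_ballPlacement [Nonempty X] (hperf : ∀ x : X, (𝓝[≠] x).NeBot)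
    (hπ : IsBalancedScheme Ψ n a U b) {anchor : List ℕ → X}
    (hanchor : ∀ t ∈ validTuples (extendBranching n a A B) (2 * n + 1),
      anchor t ∈ topSet n U t.dropLast)
    {D : Set X} (hD : D.Countable) (w₀ : X) {η : ℝ} (hη : 0 < η) :
    ∃ (pc qc : List ℕ → X) (ρ r δ : ℝ), IsBallPlacement Ψ n a U A B pc qc ρ r δ ∧ r < η ∧
      (∀ u ∈ validTuples (extendBranching n a A B) (2 * n + 2),
        dist (qc u) (anchor u.dropLast) < η ∧ r < dist (qc u) w₀ ∧ ∀ x ∈ D, dist x (qc u) ≠ r) := by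
  set V₂ := validTuples (extendBranching n a A B) (2 * n + 2)
  obtain ⟨pc, ρ, hρ, hρη, hpc, hpc_sep⟩ := exists_separated_near hperf _
    (fun t ht => ⟨hπ.isOpen_topSet (validTuples_extendBranching (A := A) (B := B) ▸
      dropLast_mem_validTuples ht), hanchor t ht⟩) (half_pos hη)
  obtain ⟨qc, δ, hδ, hqc_inj, hqc, hqc_spread, hqc_near⟩ := exists_clustered_near hperf V₂
    (fun u => pc u.dropLast) (PhiIdx Ψ (extendBranching n a A B) n <+: ·.dropLast) w₀
    (half_pos hρ)
  have hw₀ : ∀ᶠ r in 𝓝[>] (0 : ℝ), ∀ u ∈ V₂, r < dist (qc u) w₀ :=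
    (eventually_all_finset V₂).2 fun u hu => by
      simpa using eventually_mul_lt 1 (dist_pos.2 (hqc u hu).2)
  obtain ⟨r, hr, ⟨⟨⟨⟨hrρ, hrδ⟩, hrη⟩, hr_sep⟩, hrw₀⟩, hr_bad⟩ := exists_pos_notMem_of_eventually
    (((((eventually_mul_lt 2 hρ).and (eventually_mul_lt 8 hδ)).and (eventually_mul_lt 1 hη)).and
      (eventually_mul_le_dist hqc_inj 8)).and hw₀)
    (hD.image2 (V₂.image qc).countable_toSet dist)
  refine ⟨pc, qc, ρ, r, δ, ⟨hρ, hr, fun t ht => (hpc t ht).2, hpc_sep,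
    fun u hu => by linarith [(hqc u hu).1], hr_sep, hrδ.le, hqc_spread, hqc_near⟩,
    by linarith, fun u hu => ⟨?_, hrw₀ u hu, fun x hx h => hr_bad ⟨x, hx, qc u, by simpa using
      ⟨u, hu, rfl⟩, h⟩⟩⟩
  have := (hpc _ (dropLast_mem_validTuples hu)).1
  linarith [dist_triangle (qc u) (pc u.dropLast) (anchor u.dropLast), (hqc u hu).1]

variable (Ψ n a U) in
structure BallExtension (D : Set X) (w₀ : X) where
  a' : ℕ → ℕ
  U' : List ℕ → Set X
  b' : ℕ → ℝ
  centres : Finset X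
  radius : ℝ
  isBalancedScheme : IsBalancedScheme Ψ (n + 1) a' U' b'
  consistent : SchemeConsistent n a a' U U'
  radius_pos : 0 < radius
  mem_schemeSet_iff : ∀ K : NonemptyCompacts X,
    K ∈ SchemeSet a' U' (n + 1) ↔ HausdorffLT (K : Set X) centres radius
  dist_ne_radius : ∀ x ∈ D, ∀ c ∈ centres, dist x c ≠ radius
  radius_lt_dist : ∀ c ∈ centres, radius < dist c w₀

theorem IsBalancedScheme.exists_ballExtension [Nonempty X] (hperf : ∀ x : X, (𝓝[≠] x).NeBot)
    (hπ : IsBalancedScheme Ψ n a U b) {D : Set X} (hD : D.Countable) (w₀ : X) {T : Finset X}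
    (hT : FitsScheme a U n T) {η : ℝ} (hη : 0 < η) :
    ∃ p : BallExtension Ψ n a U D w₀, HausdorffLE (p.centres : Set X) T η ∧ p.radius < η := by
  -- `A > T.card` leaves room to anchor every point of `T`; `A` and `B` grow as fast as the
  -- branching numbers of a balanced scheme must.
  set P := ∏ i ∈ Finset.range (2 * n), a i
  set A := 2 * n * P + T.card + 2
  set B := (2 * n + 1) * (P * A) + 1
  obtain ⟨anchor, hanchor, hanchor_surj⟩ := hT.exists_anchor (A := A) (by omega) B
  obtain ⟨pc, qc, ρ, r, δ, hP, hrη, hqc⟩ :=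
    hπ.exists_ballPlacement hperf (fun t ht => (hanchor t ht).2) hD w₀ hη
  set V₂ := validTuples (extendBranching n a A B) (2 * n + 2)
  refine ⟨⟨_, _, _, V₂.image qc, r, hπ.extend (by omega) (Nat.le_add_right_of_le
    (Nat.le_add_right _ _)) (Nat.le_add_right _ 1) hP,
    schemeConsistent_extend, hP.r_pos, fun K => mem_schemeSet_extendSets_iff, ?_, ?_⟩,
    ⟨fun c hc => ?_, fun x hx => ?_⟩, hrη⟩
  · intro x hx c hc
    obtain ⟨u, hu, rfl⟩ := Finset.mem_image.1 hc
    exact (hqc u hu).2.2 x hx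
  · intro c hc
    obtain ⟨u, hu, rfl⟩ := Finset.mem_image.1 hc
    exact (hqc u hu).2.1
  · obtain ⟨u, hu, rfl⟩ := Finset.mem_image.1 hc
    exact ⟨_, (hanchor _ (dropLast_mem_validTuples hu)).1, (hqc u hu).1.le⟩
  · obtain ⟨t, ht, rfl⟩ := hanchor_surj x hx
    have hu : t ++ [0] ∈ V₂ := append_singleton_mem_validTuples ht (by simp [B])
    refine ⟨qc (t ++ [0]), Finset.mem_image_of_mem qc hu, ?_⟩
    simpa [dist_comm] using (hqc _ hu).1.le

end BallExtension

namespace BallExtension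

variable {X : Type*} [MetricSpace X] {Ψ : ℕ → List ℕ} {n : ℕ} {a : ℕ → ℕ}
  {U : List ℕ → Set X} {D : Set X} {w₀ : X}

def schemeSet (p : BallExtension Ψ n a U D w₀) : Set (NonemptyCompacts X) :=
  SchemeSet p.a' p.U' (n + 1)

lemma disjoint_of_far (p q : BallExtension Ψ n a U D w₀) {c : X} (hc : c ∈ p.centres)
    (hfar : ∀ c' ∈ q.centres, p.radius + q.radius ≤ dist c c') :
    Disjoint p.schemeSet q.schemeSet := by
  refine Set.disjoint_left.2 fun K hKp hKq => ?_
  obtain ⟨c', hc', hcc'⟩ :=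
    ((p.mem_schemeSet_iff K).1 hKp).exists_dist_lt ((q.mem_schemeSet_iff K).1 hKq) hc
  exact (hfar c' hc').not_gt hcc'

lemma eventually_disjoint {T : Finset X} (q : BallExtension Ψ n a U D w₀)
    (hq : ¬ HausdorffLE (T : Set X) q.centres q.radius) :
    ∀ᶠ η in 𝓝[>] (0 : ℝ), ∀ p : BallExtension Ψ n a U D w₀,
      HausdorffLE (p.centres : Set X) T η → p.radius < η → Disjoint p.schemeSet q.schemeSet := by
  rw [HausdorffLE, not_and_or] at hq
  push Not at hq
  rcases hq with ⟨x, hx, hxq⟩ | ⟨c, hc, hcT⟩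
  · filter_upwards [(eventually_all_finset q.centres).2 fun c hc =>
      eventually_mul_lt 2 (sub_pos.2 (hxq c hc))] with η hη p hpT hp
    obtain ⟨c', hc', hxc'⟩ := hpT.2 x hx
    refine p.disjoint_of_far q hc' fun c hc => ?_
    linarith [hη c hc, dist_triangle x c' c]
  · filter_upwards [(eventually_all_finset T).2 fun x hx =>
      eventually_mul_lt 2 (sub_pos.2 (hcT x hx))] with η hη p hpT hp
    refine (q.disjoint_of_far p hc fun c' hc' => ?_).symm
    obtain ⟨x, hx, hc'x⟩ := hpT.1 c' hc'
    linarith [hη x hx, dist_triangle c c' x]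

lemma mem_schemeSet_of_hausdorffLE (q : BallExtension Ψ n a U D w₀) {K : NonemptyCompacts X}
    (hKD : (K : Set X) ⊆ D) (hK : HausdorffLE (K : Set X) q.centres q.radius) :
    K ∈ q.schemeSet :=
  (q.mem_schemeSet_iff K).2 (hK.hausdorffLT fun x hx c hc => q.dist_ne_radius x (hKD hx) c hc)

lemma not_hausdorffLE_of_mem (q : BallExtension Ψ n a U D w₀) {T : Set X} (hw₀ : w₀ ∈ T) :
    ¬ HausdorffLE T q.centres q.radius := fun h => by
  obtain ⟨c, hc, hw₀c⟩ := h.1 w₀ hw₀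
  linarith [q.radius_lt_dist c hc, dist_comm c w₀]

end BallExtension

section Refinements

variable {X : Type*} [MetricSpace X] {Ψ : ℕ → List ℕ} {n : ℕ} {a : ℕ → ℕ}
  {U : List ℕ → Set X} {b : ℕ → ℝ} {D : Set X} {w₀ : X}

lemma IsBalancedScheme.exists_ballExtension_disjoint [Nonempty X]
    (hperf : ∀ x : X, (𝓝[≠] x).NeBot) (hπ : IsBalancedScheme Ψ n a U b) (hD : D.Countable)
    {T : Finset X} (hT : FitsScheme a U n T) (l : List (BallExtension Ψ n a U D w₀))
    (hl : ∀ q ∈ l, ¬ HausdorffLE (T : Set X) q.centres q.radius) {η : ℝ} (hη : 0 < η) :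
    ∃ p : BallExtension Ψ n a U D w₀, HausdorffLE (p.centres : Set X) T η ∧
      ∀ q ∈ l, Disjoint p.schemeSet q.schemeSet := by
  have hdisj := (eventually_all_finset l.toFinset).2 fun q hq =>
    q.eventually_disjoint (hl q (List.mem_toFinset.1 hq))
  obtain ⟨η', ⟨hη'η, hη'⟩, hη'_pos⟩ :=
    (((eventually_mul_lt 1 hη).and hdisj).and self_mem_nhdsWithin).exists
  obtain ⟨p, hpT, hp⟩ := hπ.exists_ballExtension hperf hD w₀ hT hη'_pos
  exact ⟨p, hpT.mono (by linarith), fun q hq => hη' q (List.mem_toFinset.2 hq) p hpT hp⟩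

theorem IsBalancedScheme.exists_seq_ballExtension [Nonempty X]
    (hperf : ∀ x : X, (𝓝[≠] x).NeBot) (hπ : IsBalancedScheme Ψ n a U b) (hD : D.Countable)
    {H : Finset X} (hHD : (H : Set X) ⊆ D) (hH : FitsScheme a U n H) (hw₀ : w₀ ∈ H) :
    ∃ f : ℕ → BallExtension Ψ n a U D w₀,
      Pairwise (fun i j => Disjoint (f i).schemeSet (f j).schemeSet) ∧
      ∀ T : Finset X, (T : Set X) ⊆ D → FitsScheme a U n T → ∀ η > 0,
        (∃ i, HausdorffLE (T : Set X) (f i).centres (f i).radius) ∨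
          ∃ m, HausdorffLE ((f m).centres : Set X) T η := by
  have hS : {T : Finset X | (T : Set X) ⊆ D ∧ FitsScheme a U n T}.Countable :=
    (countable_setOf_finset_subset hD).mono fun _ hT => hT.1
  obtain ⟨e, he_mem, he_surj⟩ := hS.exists_enum_prod_nat ⟨H, hHD, hH⟩
  let R : List (BallExtension Ψ n a U D w₀) → BallExtension Ψ n a U D w₀ → Prop := fun l p =>
    (∀ q ∈ l, Disjoint p.schemeSet q.schemeSet) ∧
      ((∀ q ∈ l, ¬ HausdorffLE ((e l.length).1 : Set X) q.centres q.radius) →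
        HausdorffLE (p.centres : Set X) (e l.length).1 (1 / ((e l.length).2 + 1)))
  -- When the enumerated target is captured by an earlier extension, `H ∋ w₀` is used instead.
  have hR : ∀ l, ∃ p, R l p := fun l => by
    by_cases hserve : ∀ q ∈ l, ¬ HausdorffLE ((e l.length).1 : Set X) q.centres q.radius
    · obtain ⟨p, hpT, hp⟩ := hπ.exists_ballExtension_disjoint hperf hD (he_mem _).2 l hserve
        Nat.one_div_pos_of_nat
      exact ⟨p, hp, fun _ => hpT⟩
    · obtain ⟨p, -, hp⟩ := hπ.exists_ballExtension_disjoint hperf hD hH l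
        (fun q _ => q.not_hausdorffLE_of_mem hw₀) one_pos
      exact ⟨p, hp, fun h => absurd h hserve⟩
  obtain ⟨f, hf⟩ := exists_seq_of_forall_list_exists R hR
  refine ⟨f, fun i j hij => ?_, fun T hTD hT η hη => ?_⟩
  · rcases hij.lt_or_gt with hij | hij
    · exact ((hf j).1 (f i) (List.mem_map.2 ⟨i, List.mem_range.2 hij, rfl⟩)).symm
    · exact (hf i).1 (f j) (List.mem_map.2 ⟨j, List.mem_range.2 hij, rfl⟩)
  obtain ⟨k, hk⟩ := exists_nat_one_div_lt hη
  obtain ⟨m, hm⟩ := he_surj T ⟨hTD, hT⟩ k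
  have hlen : ((List.range m).map f).length = m := by simp
  by_cases hserve : ∀ q ∈ (List.range m).map f, ¬ HausdorffLE (T : Set X) q.centres q.radius
  · refine Or.inr ⟨m, ?_⟩
    have := (hf m).2 (by rwa [hlen, hm])
    rw [hlen, hm] at this
    exact this.mono hk.le
  · push Not at hserve
    obtain ⟨q, hq, hTq⟩ := hserve
    obtain ⟨i, -, rfl⟩ := List.mem_map.1 hq
    exact Or.inl ⟨i, hTq⟩

end Refinements

section Density

variable {X : Type*} [MetricSpace X] {Ψ : ℕ → List ℕ} {n : ℕ} {a : ℕ → ℕ}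
  {U : List ℕ → Set X} {b : ℕ → ℝ} {D : Set X} {w₀ : X}

def Finset.toNonemptyCompacts (T : Finset X) (hT : T.Nonempty) : NonemptyCompacts X :=
  ⟨⟨T, T.finite_toSet.isCompact⟩, Finset.coe_nonempty.2 hT⟩

lemma IsBalancedScheme.exists_finset_fitsScheme [Nonempty X] (hπ : IsBalancedScheme Ψ n a U b)
    (hD : Dense D) : ∃ H : Finset X, (H : Set X) ⊆ D ∧ FitsScheme a U n H := by
  classical
  have hpick : ∀ l ∈ validTuples a (2 * n), ∃ y ∈ D, y ∈ topSet n U l := fun l hl =>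
    hD.exists_mem_open (hπ.isOpen_topSet hl) (hπ.topSet_nonempty hl)
  choose! y hyD hy using hpick
  refine ⟨(validTuples a (2 * n)).image y, ?_, fun x hx => ?_, fun l hl => ⟨y l, ?_, hy l hl⟩⟩
  · intro x hx
    obtain ⟨l, hl, rfl⟩ := Finset.mem_image.1 hx
    exact hyD l hl
  · obtain ⟨l, hl, rfl⟩ := Finset.mem_image.1 hx
    exact ⟨l, hl, hy l hl⟩
  · exact Finset.mem_image_of_mem y hl

lemma IsBalancedScheme.exists_finset_near (hπ : IsBalancedScheme Ψ n a U b) (hD : Dense D)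
    {K : NonemptyCompacts X} (hK : FitsScheme a U n K) {ε : ℝ} (hε : 0 < ε) :
    ∃ T : Finset X, (T : Set X) ⊆ D ∧ FitsScheme a U n T ∧ HausdorffLE (K : Set X) T ε := by
  classical
  have : Nonempty X := ⟨K.nonempty.some⟩
  have hnear : ∀ x, ∀ l ∈ validTuples a (2 * n), x ∈ topSet n U l →
      ∃ y ∈ D, y ∈ topSet n U l ∧ dist x y < ε / 2 := fun x l hl hx => by
    obtain ⟨y, hyD, hyl, hxy⟩ := hD.exists_mem_open ((hπ.isOpen_topSet hl).inter isOpen_ball)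
      ⟨x, hx, mem_ball_self (half_pos hε)⟩
    exact ⟨y, hyD, hyl, by rwa [mem_ball, dist_comm] at hxy⟩
  choose! near hnearD hnear_top hnear_dist using hnear
  choose! lx hlx hxlx using hK.1
  choose! xl hxl using hK.2
  obtain ⟨F, hFK, hF, hKF⟩ := finite_cover_balls_of_compact K.isCompact (half_pos hε)
  set P := hF.toFinset.image (fun x => (x, lx x)) ∪
    (validTuples a (2 * n)).image (fun l => (xl l, l))
  have hP : ∀ p ∈ P, p.1 ∈ (K : Set X) ∧ p.2 ∈ validTuples a (2 * n) ∧ p.1 ∈ topSet n U p.2 := by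
    intro p hp
    rcases Finset.mem_union.1 hp with hp | hp <;> obtain ⟨x, hx, rfl⟩ := Finset.mem_image.1 hp
    · have hxK := hFK (hF.mem_toFinset.1 hx)
      exact ⟨hxK, hlx x hxK, hxlx x hxK⟩
    · exact ⟨(hxl x hx).1, hx, (hxl x hx).2⟩
  refine ⟨P.image fun p => near p.1 p.2, fun y hy => ?_, ⟨fun y hy => ?_, fun l hl => ?_⟩,
    fun x hx => ?_, fun y hy => ?_⟩
  · obtain ⟨p, hp, rfl⟩ := Finset.mem_image.1 hy
    exact hnearD _ _ (hP p hp).2.1 (hP p hp).2.2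
  · obtain ⟨p, hp, rfl⟩ := Finset.mem_image.1 hy
    exact ⟨p.2, (hP p hp).2.1, hnear_top _ _ (hP p hp).2.1 (hP p hp).2.2⟩
  · have hp : (xl l, l) ∈ P := Finset.mem_union_right _ (Finset.mem_image_of_mem _ hl)
    exact ⟨_, Finset.mem_image_of_mem (fun p => near p.1 p.2) hp,
      hnear_top _ _ (hP _ hp).2.1 (hP _ hp).2.2⟩
  · obtain ⟨z, hz, hxz⟩ := Set.mem_iUnion₂.1 (hKF hx)
    have hp : (z, lx z) ∈ P :=
      Finset.mem_union_left _ (Finset.mem_image_of_mem _ (hF.mem_toFinset.2 hz))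
    refine ⟨_, Finset.mem_image_of_mem (fun p => near p.1 p.2) hp, ?_⟩
    linarith [mem_ball.1 hxz, dist_triangle x z (near z (lx z)),
      hnear_dist _ _ (hP _ hp).2.1 (hP _ hp).2.2]
  · obtain ⟨p, hp, rfl⟩ := Finset.mem_image.1 hy
    refine ⟨p.1, (hP p hp).1, ?_⟩
    linarith [hnear_dist _ _ (hP p hp).2.1 (hP p hp).2.2, dist_comm p.1 (near p.1 p.2)]

lemma IsBalancedScheme.schemeSet_subset_closure (hπ : IsBalancedScheme Ψ n a U b)
    (hD : Dense D) {f : ℕ → BallExtension Ψ n a U D w₀}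
    (hf : ∀ T : Finset X, (T : Set X) ⊆ D → FitsScheme a U n T → ∀ η > 0,
      (∃ i, HausdorffLE (T : Set X) (f i).centres (f i).radius) ∨
        ∃ m, HausdorffLE ((f m).centres : Set X) T η) :
    SchemeSet a U n ⊆ closure (⋃ j, (f j).schemeSet) := by
  intro K hK
  refine Metric.mem_closure_iff.2 fun ε hε => ?_
  obtain ⟨T, hTD, hT, hKT⟩ := hπ.exists_finset_near hD (mem_schemeSet_iff.1 hK) (half_pos hε)
  have hTne : T.Nonempty := by exact_mod_cast hT.nonempty hπ
  rcases hf T hTD hT (ε / 4) (by positivity) with ⟨i, hTi⟩ | ⟨m, hmT⟩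
  · refine ⟨T.toNonemptyCompacts hTne,
      Set.mem_iUnion.2 ⟨i, (f i).mem_schemeSet_of_hausdorffLE hTD hTi⟩, ?_⟩
    rw [NonemptyCompacts.dist_eq]
    exact (hKT.hausdorffDist_le (half_pos hε).le).trans_lt (half_lt_self hε)
  · have hC : (f m).centres.Nonempty := by
      obtain ⟨c, hc, -⟩ := hmT.2 _ hTne.choose_spec
      exact ⟨c, hc⟩
    refine ⟨(f m).centres.toNonemptyCompacts hC, Set.mem_iUnion.2 ⟨m,
      ((f m).mem_schemeSet_iff _).2 (hausdorffLT_self _ (f m).radius_pos)⟩, ?_⟩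
    rw [NonemptyCompacts.dist_eq]
    exact ((hKT.trans hmT.symm).hausdorffDist_le (by positivity)).trans_lt (by linarith)

end Density

end

theorem balanced_scheme_disjoint_dense_refinements_general
    {X : Type*} [MetricSpace X] [Nonempty X] [SeparableSpace X]
    (hperf : ∀ x : X, (nhdsWithin x {x}ᶜ).NeBot)
    (Ψ : ℕ → List ℕ)
    (n : ℕ) (a : ℕ → ℕ) (U : List ℕ → Set X) (b : ℕ → ℝ)
    (hπ : IsBalancedScheme Ψ n a U b) :
    ∃ (a' : ℕ → ℕ → ℕ) (U' : ℕ → List ℕ → Set X) (b' : ℕ → ℕ → ℝ),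
      (∀ j, IsBalancedScheme Ψ (n + 1) (a' j) (U' j) (b' j)) ∧
      (∀ j, SchemeConsistent n a (a' j) U (U' j)) ∧
      (Pairwise fun j j' => Disjoint (SchemeSet (a' j) (U' j) (n + 1))
        (SchemeSet (a' j') (U' j') (n + 1))) ∧
      SchemeSet a U n ⊆ closure (⋃ j : ℕ, SchemeSet (a' j) (U' j) (n + 1)) := by
  obtain ⟨D, hDc, hDd⟩ := exists_countable_dense X
  obtain ⟨H, hHD, hH⟩ := hπ.exists_finset_fitsScheme hDd
  obtain ⟨w₀, hw₀⟩ := hH.nonempty hπ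
  obtain ⟨f, hf_disj, hf_dense⟩ := hπ.exists_seq_ballExtension hperf hDc hHD hH hw₀
  exact ⟨fun j => (f j).a', fun j => (f j).U', fun j => (f j).b',
    fun j => (f j).isBalancedScheme, fun j => (f j).consistent, hf_disj,
    hπ.schemeSet_subset_closure hDd hf_dense⟩

/-- Lemma: in a non-empty perfect Polish space, for every balanced scheme `π` of size `n`
there are balanced schemes `π_j` (`j ∈ ℕ`) of size `n+1`, each consistent with `π`, with
pairwise disjoint sets `𝒰(π_j)` whose union is dense in `𝒰(π)`. -/
theorem balanced_scheme_disjoint_dense_refinements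
    {X : Type*} [MetricSpace X] [Nonempty X] [CompleteSpace X] [SeparableSpace X]
    (hperf : ∀ x : X, (nhdsWithin x {x}ᶜ).NeBot)
    (Ψ : ℕ → List ℕ) (hΨsurj : ∀ l : List ℕ, ∃ m, Ψ m = l)
    (hΨlen : ∀ m, (Ψ m).length ≤ 2 * m + 1)
    (n : ℕ) (a : ℕ → ℕ) (U : List ℕ → Set X) (b : ℕ → ℝ)
    (hπ : IsBalancedScheme Ψ n a U b) :
    ∃ (a' : ℕ → ℕ → ℕ) (U' : ℕ → List ℕ → Set X) (b' : ℕ → ℕ → ℝ),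
      (∀ j, IsBalancedScheme Ψ (n + 1) (a' j) (U' j) (b' j)) ∧
      (∀ j, SchemeConsistent n a (a' j) U (U' j)) ∧
      (Pairwise fun j j' => Disjoint (SchemeSet (a' j) (U' j) (n + 1))
        (SchemeSet (a' j') (U' j') (n + 1))) ∧
      SchemeSet a U n ⊆ closure (⋃ j : ℕ, SchemeSet (a' j) (U' j) (n + 1)) :=
  balanced_scheme_disjoint_dense_refinements_general hperf Ψ n a U b hπ
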